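/- As ℂ-vector spaces, Cl = ℂ·1 ⊕ (Cl·w₁₁ + Cl·w₂₁ + Cl·w₁₂ + Cl·w₂₂); equivalently, the image of ∇ : M_A^{1,1} → M_A^{0,0} ≅ Cl, which equals the ℂ-subspace Cl·w₁₁ + Cl·w₂₁ + Cl·w₁₂ + Cl·w₂₂, has codimension 1 in Cl and does not contain 1. Hence the homology of the quadrant-A complex at M(0,0,0,0) = M_A^{0,0}, namely M_A^{0,0}/∇(M_A^{1,1}), is one-dimensional (the trivial representation). -/
import Mathlib


/- Setup: `Cl` is the Clifford algebra over `ℂ[Θ]` realizing `U(𝔤₍<₀₎)` for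
`𝒜(K′₄)`, with `w11, w22, w12, w21` as in the paper.  The image of
`∇ : M_A^{1,1} → M_A^{0,0} ≅ Cl` equals the `ℂ`-subspace
`W = Cl·w₁₁ + Cl·w₂₁ + Cl·w₁₂ + Cl·w₂₂`. -/

set_option synthInstance.maxHeartbeats 1000000
set_option maxHeartbeats 1000000

noncomputable section

def Qf : QuadraticForm (Polynomial ℂ) (Fin 4 → Polynomial ℂ) :=
  QuadraticMap.weightedSumSquares (Polynomial ℂ) (fun _ : Fin 4 => (Polynomial.X : Polynomial ℂ))

abbrev Cl : Type := CliffordAlgebra Qf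

def η (i : Fin 4) : Cl := CliffordAlgebra.ι Qf (Pi.single i 1)

def ii : Cl := algebraMap ℂ Cl Complex.I

def w11 : Cl := η 1 + ii * η 0
def w22 : Cl := η 1 - ii * η 0
def w12 : Cl := -(η 3) + ii * η 2
def w21 : Cl := η 3 + ii * η 2

/-- `W = Cl·w₁₁ + Cl·w₂₁ + Cl·w₁₂ + Cl·w₂₂` as a `ℂ`-subspace of `Cl`. -/
def W : Submodule ℂ Cl :=
  LinearMap.range (LinearMap.mulRight ℂ w11) ⊔ LinearMap.range (LinearMap.mulRight ℂ w21) ⊔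
  LinearMap.range (LinearMap.mulRight ℂ w12) ⊔ LinearMap.range (LinearMap.mulRight ℂ w22)

/-! ### The augmentation functional, via the quotient `ℂ[Θ]⧸(Θ)` -/

abbrev Aq : Type := Polynomial ℂ ⧸ Ideal.span {Polynomial.X - Polynomial.C (0:ℂ)}

def eA : Aq ≃ₐ[ℂ] ℂ := Polynomial.quotientSpanXSubCAlgEquiv (0:ℂ)

lemma Qf_mem (m : Fin 4 → Polynomial ℂ) :
    Qf m ∈ Ideal.span {Polynomial.X - Polynomial.C (0:ℂ)} := by
  simp only [Qf, QuadraticMap.weightedSumSquares_apply, map_zero, sub_zero,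
    Ideal.mem_span_singleton, smul_eq_mul]
  exact Finset.dvd_sum fun i _ => Dvd.intro _ rfl

def ψ : Cl →ₐ[Polynomial ℂ] Aq :=
  CliffordAlgebra.lift Qf ⟨0, fun m => by
    simp only [LinearMap.zero_apply, mul_zero]
    rw [Ideal.Quotient.algebraMap_eq, eq_comm, Ideal.Quotient.eq_zero_iff_mem]
    exact Qf_mem m⟩

lemma ψ_η (i : Fin 4) : ψ (η i) = 0 := by
  rw [ψ, η, CliffordAlgebra.lift_ι_apply]; rfl

lemma ψ_w11 : ψ w11 = 0 := by simp [w11, map_add, map_mul, ψ_η]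
lemma ψ_w22 : ψ w22 = 0 := by simp [w22, map_sub, map_mul, ψ_η]
lemma ψ_w12 : ψ w12 = 0 := by simp [w12, map_add, map_mul, ψ_η]
lemma ψ_w21 : ψ w21 = 0 := by simp [w21, map_add, map_mul, ψ_η]

def φC : Cl →ₗ[ℂ] ℂ := eA.toLinearMap ∘ₗ (ψ.toLinearMap.restrictScalars ℂ)

lemma φC_one : φC 1 = 1 := by simp [φC]

/-! ### Membership lemmas for `W` -/

lemma mem_W_w11 (u : Cl) : u * w11 ∈ W :=
  Submodule.mem_sup_left <| Submodule.mem_sup_left <| Submodule.mem_sup_left ⟨u, rfl⟩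
lemma mem_W_w21 (u : Cl) : u * w21 ∈ W :=
  Submodule.mem_sup_left <| Submodule.mem_sup_left <| Submodule.mem_sup_right ⟨u, rfl⟩
lemma mem_W_w12 (u : Cl) : u * w12 ∈ W :=
  Submodule.mem_sup_left <| Submodule.mem_sup_right ⟨u, rfl⟩
lemma mem_W_w22 (u : Cl) : u * w22 ∈ W :=
  Submodule.mem_sup_right ⟨u, rfl⟩

lemma ii_mul (x : Cl) : ii * x = Complex.I • x := (Algebra.smul_def _ _).symm

/-- Each `η i` is a `ℂ`-linear combination of the four `w`'s, so `Cl·η i ⊆ W`. -/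
lemma mem_W_η (u : Cl) (i : Fin 4) : u * η i ∈ W := by
  fin_cases i
  · show u * η 0 ∈ W
    have h : u * η 0 = (-(Complex.I)/2) • (u * w11) + (Complex.I/2) • (u * w22) := by
      simp only [w11, w22, mul_add, mul_sub, ii_mul, mul_smul_comm]
      match_scalars <;> ring_nf <;> simp [Complex.I_sq]
    rw [h]; exact W.add_mem (W.smul_mem _ (mem_W_w11 u)) (W.smul_mem _ (mem_W_w22 u))
  · show u * η 1 ∈ W
    have h : u * η 1 = ((1:ℂ)/2) • (u * w11) + ((1:ℂ)/2) • (u * w22) := by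
      simp only [w11, w22, mul_add, mul_sub, ii_mul, mul_smul_comm]
      match_scalars <;> ring_nf <;> simp [Complex.I_sq]
    rw [h]; exact W.add_mem (W.smul_mem _ (mem_W_w11 u)) (W.smul_mem _ (mem_W_w22 u))
  · show u * η 2 ∈ W
    have h : u * η 2 = (-(Complex.I)/2) • (u * w12) + (-(Complex.I)/2) • (u * w21) := by
      simp only [w12, w21, mul_add, mul_sub, mul_neg, ii_mul, mul_smul_comm]
      match_scalars <;> ring_nf <;> simp [Complex.I_sq]
    rw [h]; exact W.add_mem (W.smul_mem _ (mem_W_w12 u)) (W.smul_mem _ (mem_W_w21 u))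
  · show u * η 3 ∈ W
    have h : u * η 3 = ((1:ℂ)/2) • (u * w21) + (-(1:ℂ)/2) • (u * w12) := by
      simp only [w12, w21, mul_add, mul_sub, mul_neg, ii_mul, mul_smul_comm]
      match_scalars <;> ring_nf <;> simp [Complex.I_sq]
    rw [h]; exact W.add_mem (W.smul_mem _ (mem_W_w21 u)) (W.smul_mem _ (mem_W_w12 u))

/-- `W` is stable under left multiplication. -/
lemma mem_W_mul_left (a : Cl) {x : Cl} (hx : x ∈ W) : a * x ∈ W := by
  rw [W] at hx
  rcases Submodule.mem_sup.mp hx with ⟨p, hp, d, ⟨u4, rfl⟩, rfl⟩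
  rcases Submodule.mem_sup.mp hp with ⟨q, hq, c, ⟨u3, rfl⟩, rfl⟩
  rcases Submodule.mem_sup.mp hq with ⟨r, ⟨u1, rfl⟩, b, ⟨u2, rfl⟩, rfl⟩
  simp only [LinearMap.mulRight_apply, mul_add, ← mul_assoc]
  exact W.add_mem (W.add_mem (W.add_mem (mem_W_w11 _) (mem_W_w21 _)) (mem_W_w12 _)) (mem_W_w22 _)

/-- `W ⊆ ker φC`. -/
lemma W_le_ker : W ≤ LinearMap.ker φC := by
  rw [W]
  refine sup_le (sup_le (sup_le ?_ ?_) ?_) ?_ <;>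
    rintro x ⟨u, rfl⟩ <;>
    simp [φC, LinearMap.mulRight_apply, map_mul, ψ_w11, ψ_w21, ψ_w12, ψ_w22]

lemma hΘ : algebraMap (Polynomial ℂ) Cl Polynomial.X = η 0 * η 0 := by
  rw [η, CliffordAlgebra.ι_sq_scalar]
  congr 1
  simp [Qf, QuadraticMap.weightedSumSquares_apply, Pi.single_apply, Fin.sum_univ_four]

/-- `ℂ·1 + W = Cl`. -/
lemma span_sup_W_eq_top : Submodule.span ℂ {(1 : Cl)} ⊔ W = ⊤ := by
  set V := Submodule.span ℂ {(1 : Cl)} ⊔ W with hV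
  suffices h : ∀ x : Cl, x ∈ V by rw [eq_top_iff]; exact fun x _ => h x
  intro x
  induction x using CliffordAlgebra.induction with
  | algebraMap p =>
    induction p using Polynomial.induction_on with
    | C a =>
      have : algebraMap (Polynomial ℂ) Cl (Polynomial.C a) = a • (1 : Cl) := by
        rw [← Polynomial.algebraMap_eq, ← IsScalarTower.algebraMap_apply,
          Algebra.algebraMap_eq_smul_one]
      rw [this]
      exact Submodule.mem_sup_left (Submodule.smul_mem _ _ (Submodule.mem_span_singleton_self 1))
    | add p q hp hq => rw [map_add]; exact V.add_mem hp hq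
    | monomial n a _ =>
      have : algebraMap (Polynomial ℂ) Cl (Polynomial.C a * Polynomial.X ^ (n + 1))
          = (algebraMap (Polynomial ℂ) Cl (Polynomial.C a * Polynomial.X ^ n) * η 0) * η 0 := by
        rw [pow_succ, ← mul_assoc, map_mul, hΘ, mul_assoc, ← mul_assoc]
      rw [this]
      exact Submodule.mem_sup_right (mem_W_η _ 0)
  | ι m =>
    have hm : m = m 0 • (Pi.single 0 1 : Fin 4 → Polynomial ℂ)
        + m 1 • (Pi.single 1 1 : Fin 4 → Polynomial ℂ)
        + m 2 • (Pi.single 2 1 : Fin 4 → Polynomial ℂ)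
        + m 3 • (Pi.single 3 1 : Fin 4 → Polynomial ℂ) := by
      funext j; fin_cases j <;> simp [Pi.single_apply]
    have : CliffordAlgebra.ι Qf m
        = algebraMap (Polynomial ℂ) Cl (m 0) * η 0 + algebraMap (Polynomial ℂ) Cl (m 1) * η 1
        + algebraMap (Polynomial ℂ) Cl (m 2) * η 2
        + algebraMap (Polynomial ℂ) Cl (m 3) * η 3 := by
      conv_lhs => rw [hm]
      simp only [map_add, map_smul]
      simp only [η, Algebra.smul_def]
    rw [this]
    exact Submodule.mem_sup_right <| W.add_mem (W.add_mem (W.add_mem (mem_W_η _ 0) (mem_W_η _ 1))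
      (mem_W_η _ 2)) (mem_W_η _ 3)
  | mul a b ha hb =>
    rcases Submodule.mem_sup.mp hb with ⟨y, hy, z, hz, rfl⟩
    rcases Submodule.mem_span_singleton.mp hy with ⟨c, rfl⟩
    have : a * (c • (1 : Cl) + z) = c • a + a * z := by
      rw [mul_add, mul_smul_comm, mul_one]
    rw [this]
    exact V.add_mem (V.smul_mem _ ha) (Submodule.mem_sup_right (mem_W_mul_left a hz))
  | add a b ha hb => exact V.add_mem ha hb

/-- `Cl = ℂ·1 ⊕ W` as `ℂ`-vector spaces: `1 ∉ W`, `ℂ·1 + W = Cl`, and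
hence the homology `M_A^{0,0}/∇(M_A^{1,1}) = Cl/W` is one-dimensional (the trivial
representation). -/
theorem homology_at_origin :
    (1 : Cl) ∉ W ∧
    (Submodule.span ℂ {(1 : Cl)} ⊔ W = ⊤) ∧
    Nonempty ((Cl ⧸ W) ≃ₗ[ℂ] ℂ) := by
  have hker : LinearMap.ker φC = W := by
    refine le_antisymm ?_ W_le_ker
    intro x hx
    have hx' : x ∈ Submodule.span ℂ {(1 : Cl)} ⊔ W := span_sup_W_eq_top ▸ Submodule.mem_top
    rcases Submodule.mem_sup.mp hx' with ⟨y, hy, z, hz, rfl⟩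
    rcases Submodule.mem_span_singleton.mp hy with ⟨c, rfl⟩
    have hz0 : φC z = 0 := W_le_ker hz
    have hc : c = 0 := by
      have := LinearMap.mem_ker.mp hx
      rw [map_add, map_smul, φC_one, hz0, add_zero, smul_eq_mul, mul_one] at this
      exact this
    simpa [hc] using hz
  refine ⟨?_, span_sup_W_eq_top, ?_⟩
  · intro h
    have : φC 1 = 0 := W_le_ker h
    rw [φC_one] at this
    exact one_ne_zero this
  · have hsurj : Function.Surjective φC := fun c => ⟨c • 1, by simp [map_smul, φC_one]⟩
    exact ⟨(Submodule.quotEquivOfEq W (LinearMap.ker φC) hker.symm).trans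
      (φC.quotKerEquivOfSurjective hsurj)⟩

end
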